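/- Global convergence equivalence: the synchronous update sends every state to the all-Glory state in one step if and only if the hub domination condition holds everywhere; formally, (∀ state s, ∀ vertex v, next_heaven(s, v) = Glory) ⟺ (∀ v ≠ g, hub_weight(v) ≥ rest_weight(v)). -/

import Mathlib

open Finset

inductive Vote where
  | Glory
  | Gnash
deriving DecidableEq

variable {V : Type*} [Fintype V] [DecidableEq V]

/-- Influence of the hub `g` on `v`. -/
def hubWeight (w : V → V → NNReal) (g v : V) : NNReal := w g v

/-- Total influence of all non-hub vertices on `v`. -/
def restWeight (w : V → V → NNReal) (g v : V) : NNReal :=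
  ∑ u ∈ Finset.univ.filter (fun u => u ≠ g), w u v

/-- The hub-forced state: agrees with `s` off the hub and is `Glory` at the hub. -/
def forceG (g : V) (s : V → Vote) : V → Vote :=
  fun u => if u = g then Vote.Glory else s u

/-- Weighted score of opinion `X` at vertex `v` in state `s`. -/
def score (w : V → V → NNReal) (X : Vote) (s : V → Vote) (v : V) : NNReal :=
  ∑ u, w u v * (if s u = X then 1 else 0)

/-- Synchronous update rule. -/
noncomputable def nextHeaven (w : V → V → NNReal) (g : V) (s : V → Vote) (v : V) : Vote :=
  if v = g then Vote.Glory
  else if score w Vote.Glory (forceG g s) v < score w Vote.Gnash (forceG g s) v then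
    Vote.Gnash
  else Vote.Glory

/-- τ-biased synchronous update rule. -/
noncomputable def nextHeavenTau (w : V → V → NNReal) (g : V) (τ : V → NNReal) (s : V → Vote) (v : V) : Vote :=
  if v = g then Vote.Glory
  else if score w Vote.Glory (forceG g s) v + τ v < score w Vote.Gnash (forceG g s) v then
    Vote.Gnash
  else Vote.Glory

/-- The state assigning `Gnash` to every vertex. -/
def allGnash : V → Vote := fun _ => Vote.Gnash

/-- The state assigning `Glory` to every vertex. -/
def allGlory : V → Vote := fun _ => Vote.Glory

/-- Asynchronous update at a single vertex. -/
noncomputable def asyncStep (w : V → V → NNReal) (g : V) (s : V → Vote) (u : V) : V → Vote :=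
  Function.update s u (nextHeaven w g s u)

/-
The hub always contributes its full weight `w g v` to the Glory score, and the Gnash score can
only collect weights of non-hub vertices, so it never exceeds `restWeight`; both bounds are
attained by the all-Gnash state, which makes the hub-domination condition sharp.
-/

lemma nextHeaven_eq_glory_iff (w : V → V → NNReal) (g : V) (s : V → Vote) (v : V) :
    nextHeaven w g s v = Vote.Glory ↔
      v = g ∨ score w Vote.Gnash (forceG g s) v ≤ score w Vote.Glory (forceG g s) v := by
  unfold nextHeaven
  split_ifs with hv hlt
  · simp [hv]
  · simp [hv, hlt]
  · simp [hv, not_lt.mp hlt]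

lemma hubWeight_le_score_glory_forceG (w : V → V → NNReal) (g v : V) (s : V → Vote) :
    hubWeight w g v ≤ score w Vote.Glory (forceG g s) v := by
  calc hubWeight w g v
      = w g v * (if forceG g s g = Vote.Glory then 1 else 0) := by simp [hubWeight, forceG]
    _ ≤ score w Vote.Glory (forceG g s) v :=
      Finset.single_le_sum (f := fun u => w u v * (if forceG g s u = Vote.Glory then 1 else 0))
        (fun _ _ => zero_le) (Finset.mem_univ g)

lemma score_gnash_forceG_le_restWeight (w : V → V → NNReal) (g v : V) (s : V → Vote) :
    score w Vote.Gnash (forceG g s) v ≤ restWeight w g v := by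
  rw [score, restWeight, Finset.sum_filter]
  refine Finset.sum_le_sum fun u _ => ?_
  by_cases hu : u = g
  · simp [hu, forceG]
  · split_ifs <;> simp_all [forceG]

lemma score_glory_forceG_allGnash (w : V → V → NNReal) (g v : V) :
    score w Vote.Glory (forceG g allGnash) v = hubWeight w g v := by
  rw [score, Finset.sum_eq_single g] <;> simp_all [forceG, allGnash, hubWeight]

lemma score_gnash_forceG_allGnash (w : V → V → NNReal) (g v : V) :
    score w Vote.Gnash (forceG g allGnash) v = restWeight w g v := by
  rw [score, restWeight, Finset.sum_filter]
  exact Finset.sum_congr rfl fun u _ => by by_cases hu : u = g <;> simp [forceG, hu, allGnash]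

theorem global_conv_equiv (w : V → V → NNReal) (g : V) :
    (∀ (s : V → Vote) (v : V), nextHeaven w g s v = Vote.Glory) ↔
      (∀ v ≠ g, hubWeight w g v ≥ restWeight w g v) := by
  constructor
  · intro hGlory v hv
    have h := (nextHeaven_eq_glory_iff w g allGnash v).1 (hGlory allGnash v)
    rw [score_glory_forceG_allGnash, score_gnash_forceG_allGnash] at h
    exact h.resolve_left hv
  · intro hDom s v
    refine (nextHeaven_eq_glory_iff w g s v).2 (or_iff_not_imp_left.2 fun hv => ?_)
    calc score w Vote.Gnash (forceG g s) v
        ≤ restWeight w g v := score_gnash_forceG_le_restWeight w g v s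
      _ ≤ hubWeight w g v := hDom v hv
      _ ≤ score w Vote.Glory (forceG g s) v := hubWeight_le_score_glory_forceG w g v s
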